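/- Let G be a gapset with multiplicity m > 1, ratio r(G) := min{x ∉ G, x ∈ ℕ : x ≢ 0 (mod m)}, and level λ(G) := ⌊r(G)/m⌋. If (k_1, …, k_{m−1}) are the Kunz coordinates of G, then λ(G) = min{k_i : 1 ≤ i ≤ m−1}. -/

import Mathlib

/-! Since `m ∉ G`, splitting `z + m ∈ G` as `z + m` forces `z ∈ G` for `z > 0`: a gapset is
closed under subtracting `m` from its positive elements. Hence the elements of `G` congruent to
`i ≢ 0` are exactly `i, i + m, …, i + (k_i - 1) m`, and the least non-gap in that class is
`i + k_i m`. The least non-gap not divisible by `m` is thus the minimum of the `i + k_i m`, whose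
quotient by `m` is `min k_i`. -/

def IsGapset (G : Finset ℕ) : Prop :=
  0 ∉ G ∧ ∀ z ∈ G, ∀ x y : ℕ, 0 < x → 0 < y → x + y = z → x ∈ G ∨ y ∈ G

def IsNumSgp (S : Set ℕ) : Prop :=
  0 ∈ S ∧ (∀ a ∈ S, ∀ b ∈ S, a + b ∈ S) ∧ Sᶜ.Finite

noncomputable def mult (G : Finset ℕ) : ℕ := sInf {s : ℕ | 0 < s ∧ s ∉ G}

noncomputable def kunz (G : Finset ℕ) (i : ℕ) : ℕ := (G.filter (fun z => z % mult G = i)).card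

noncomputable def gapConductor (G : Finset ℕ) : ℕ := sInf {s : ℕ | 0 < s ∧ ∀ n : ℕ, s + n ∉ G}

noncomputable def gapDepth (G : Finset ℕ) : ℕ := (gapConductor G + mult G - 1) / mult G

def KunzIneq (m : ℕ) (k : ℕ → ℕ) : Prop :=
  (∀ i j : ℕ, 1 ≤ i → i ≤ j → j ≤ m - 1 → i + j < m → k (i + j) ≤ k i + k j) ∧
  (∀ i j : ℕ, 1 ≤ i → i ≤ j → j ≤ m - 1 → m < i + j → k (i + j - m) ≤ k i + k j + 1)

theorem Finset.mem_iff_lt_card_of_isLowerSet {s : Finset ℕ} (hs : IsLowerSet (s : Set ℕ))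
    (t : ℕ) : t ∈ s ↔ t < s.card := by
  rcases hs.eq_univ_or_Iio with huniv | ⟨a, hIio⟩
  · exact absurd (huniv ▸ s.finite_toSet) Set.infinite_univ
  · have hs_eq : s = Finset.Iio a := by ext; simp [← Finset.mem_coe, hIio]
    simp [hs_eq]

theorem exists_pos_notMem (G : Finset ℕ) : ∃ s, 0 < s ∧ s ∉ G :=
  ⟨G.sup id + 1, Nat.succ_pos _,
    fun h => (Finset.le_sup (f := id) h).not_gt (Nat.lt_succ_self _)⟩

theorem mult_pos (G : Finset ℕ) : 0 < mult G :=
  (Nat.sInf_mem (exists_pos_notMem G)).1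

theorem mult_notMem (G : Finset ℕ) : mult G ∉ G :=
  (Nat.sInf_mem (exists_pos_notMem G)).2

theorem mem_image_div_filter_mod_iff {G : Finset ℕ} {m i : ℕ} (hi : i < m) (t : ℕ) :
    t ∈ (G.filter (· % m = i)).image (· / m) ↔ i + t * m ∈ G := by
  simp only [Finset.mem_image, Finset.mem_filter]
  constructor
  · rintro ⟨z, ⟨hz, rfl⟩, rfl⟩
    rwa [Nat.mod_add_div']
  · intro h
    refine ⟨i + t * m, ⟨h, ?_⟩, ?_⟩
    · rw [Nat.add_mul_mod_self_right, Nat.mod_eq_of_lt hi]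
    · rw [Nat.add_mul_div_right _ _ (by omega), Nat.div_eq_of_lt hi, zero_add]

theorem kunz_eq_card_image_div (G : Finset ℕ) (i : ℕ) :
    kunz G i = ((G.filter (· % mult G = i)).image (· / mult G)).card := by
  refine (Finset.card_image_of_injOn fun y hy z hz hyz => ?_).symm
  simp only [Finset.mem_coe, Finset.mem_filter] at hy hz
  rw [← Nat.mod_add_div' y (mult G), ← Nat.mod_add_div' z (mult G), hy.2, hz.2]
  exact congrArg (i + · * mult G) hyz

namespace IsGapset

variable {G : Finset ℕ}

theorem mem_of_add_mult_mem (hG : IsGapset G) {z : ℕ} (hz : 0 < z) (h : z + mult G ∈ G) :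
    z ∈ G :=
  (hG.2 _ h z (mult G) hz (mult_pos G) rfl).resolve_right (mult_notMem G)

theorem add_mul_mult_mem_of_le (hG : IsGapset G) {i a b : ℕ} (hi : 0 < i) (hab : a ≤ b)
    (hb : i + b * mult G ∈ G) : i + a * mult G ∈ G := by
  obtain ⟨d, rfl⟩ := Nat.exists_eq_add_of_le hab
  induction d with
  | zero => simpa using hb
  | succ d ih =>
    refine ih (by omega) (hG.mem_of_add_mult_mem (by positivity) ?_)
    convert hb using 1
    ring

theorem add_mul_mult_mem_iff (hG : IsGapset G) {i : ℕ} (hi : 0 < i) (him : i < mult G) (t : ℕ) :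
    i + t * mult G ∈ G ↔ t < kunz G i := by
  have hlower : IsLowerSet (((G.filter (· % mult G = i)).image (· / mult G) : Finset ℕ) :
      Set ℕ) := by
    intro b a hab hb
    simp only [Finset.mem_coe, mem_image_div_filter_mod_iff him] at hb ⊢
    exact hG.add_mul_mult_mem_of_le hi hab hb
  rw [← mem_image_div_filter_mod_iff him, Finset.mem_iff_lt_card_of_isLowerSet hlower,
    kunz_eq_card_image_div]

theorem notMem_iff_kunz_le (hG : IsGapset G) {x : ℕ} (hx : ¬ mult G ∣ x) :
    x ∉ G ↔ kunz G (x % mult G) ≤ x / mult G := by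
  have hpos : 0 < x % mult G := Nat.pos_of_ne_zero fun h => hx (Nat.dvd_of_mod_eq_zero h)
  rw [← Nat.mod_add_div' x (mult G), hG.add_mul_mult_mem_iff hpos (Nat.mod_lt _ (mult_pos G)),
    not_lt, Nat.mod_add_div']

end IsGapset

theorem level_eq_min_kunz (G : Finset ℕ) (hG : IsGapset G) (hm : 1 < mult G) :
    sInf {x : ℕ | x ∉ G ∧ ¬ mult G ∣ x} / mult G =
      (Finset.Ico 1 (mult G)).inf' (Finset.nonempty_Ico.mpr hm) (kunz G) := by
  set m := mult G
  obtain ⟨i, hi, hiK⟩ := Finset.exists_mem_eq_inf' (Finset.nonempty_Ico.mpr hm) (kunz G)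
  rw [Finset.mem_Ico] at hi
  rw [hiK]
  have hi_ndvd : ¬ m ∣ i + kunz G i * m := by
    rw [Nat.dvd_add_left (dvd_mul_left m _)]
    exact Nat.not_dvd_of_pos_of_lt hi.1 hi.2
  have hdiv : (i + kunz G i * m) / m = kunz G i := by
    rw [Nat.add_mul_div_right _ _ (mult_pos G), Nat.div_eq_of_lt hi.2, zero_add]
  have hwitness : i + kunz G i * m ∈ {x | x ∉ G ∧ ¬ m ∣ x} := by
    refine ⟨?_, hi_ndvd⟩
    rw [hG.notMem_iff_kunz_le hi_ndvd, Nat.add_mul_mod_self_right, Nat.mod_eq_of_lt hi.2, hdiv]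
  obtain ⟨hvG, hv_ndvd⟩ := Nat.sInf_mem ⟨_, hwitness⟩
  have hv_mod_pos : 0 < sInf {x | x ∉ G ∧ ¬ m ∣ x} % m :=
    Nat.pos_of_ne_zero fun h => hv_ndvd (Nat.dvd_of_mod_eq_zero h)
  apply le_antisymm
  · exact hdiv ▸ Nat.div_le_div_right (Nat.sInf_le hwitness)
  · calc kunz G i ≤ kunz G (sInf {x | x ∉ G ∧ ¬ m ∣ x} % m) :=
          hiK ▸ Finset.inf'_le _ (Finset.mem_Ico.mpr ⟨hv_mod_pos, Nat.mod_lt _ (mult_pos G)⟩)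
      _ ≤ _ := (hG.notMem_iff_kunz_le hv_ndvd).1 hvG
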